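/- arXiv:2401.07412 — 7 statements merged into one kernel-verified Lean document; each statement's English description precedes it below -/
import Mathlib

section
/- Let k be a positive integer with det(A^k − I) ≠ 0. The map Ψ_k : BF_k(A) → 𝕋^b given by n + Γ_k ↦ (A^k − I)^{-1} n + ℤ^b is a well-defined injective group homomorphism, and its image is exactly the fixed point set Fix(Φ_A^k) = { y ∈ 𝕋^b : Φ_A^k(y) = y }. In particular, Fix(Φ_A^k) is a subgroup of 𝕋^b isomorphic to BF_k(A). -/
open Matrix Filter

/-!
Write `B = A^k - 1`, invertible over `ℝ`. Since `B⁻¹ n ∈ ℤ^b` exactly when `n ∈ B ℤ^b`, the map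
`n ↦ π (B⁻¹ n)` has kernel `B ℤ^b` and descends to an injection of `BF_k(A)` into the torus.
As `Φ^k` is induced by `A^k`, a point `π x` is fixed by `Φ^k` iff `B x ∈ ℤ^b`, i.e. iff
`x = B⁻¹ n` with `n ∈ ℤ^b`: the fixed points are exactly the image.
-/

/-- The coercion of an integer vector to a real vector. -/
noncomputable def intVec {b : ℕ} (n : Fin b → ℤ) : Fin b → ℝ := fun i => (n i : ℝ)

/-- The integer lattice `ℤ^b` as an additive subgroup of `ℝ^b`. -/
def latticeZ (b : ℕ) : AddSubgroup (Fin b → ℝ) where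
  carrier := Set.range (fun n : Fin b → ℤ => intVec n)
  add_mem' := by rintro _ _ ⟨m, rfl⟩ ⟨n, rfl⟩; exact ⟨m + n, by funext i; simp [intVec]⟩
  zero_mem' := ⟨0, by funext i; simp [intVec]⟩
  neg_mem' := by rintro _ ⟨n, rfl⟩; exact ⟨-n, by funext i; simp [intVec]⟩

/-- The torus `𝕋^b = ℝ^b / ℤ^b`. -/
abbrev Torus (b : ℕ) := (Fin b → ℝ) ⧸ latticeZ b

/-- The projection `π : ℝ^b → 𝕋^b`. -/
noncomputable def projT (b : ℕ) : (Fin b → ℝ) →+ Torus b := QuotientAddGroup.mk' (latticeZ b)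

/-- The real matrix associated to an integer matrix. -/
noncomputable def realMat {b : ℕ} (A : Matrix (Fin b) (Fin b) ℤ) : Matrix (Fin b) (Fin b) ℝ :=
  A.map (Int.cast)

section BowenFranks

variable {b : ℕ}

lemma realMat_eq_mapMatrix (M : Matrix (Fin b) (Fin b) ℤ) :
    realMat M = (Int.castRingHom ℝ).mapMatrix M :=
  rfl

lemma realMat_pow_sub_one (A : Matrix (Fin b) (Fin b) ℤ) (k : ℕ) :
    realMat (A ^ k - 1) = realMat A ^ k - 1 := by
  simp only [realMat_eq_mapMatrix, map_sub, map_pow, map_one]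

lemma isUnit_det_realMat {M : Matrix (Fin b) (Fin b) ℤ} (hM : M.det ≠ 0) :
    IsUnit (realMat M).det := by
  rw [realMat_eq_mapMatrix, ← RingHom.map_det, eq_intCast, isUnit_iff_ne_zero]
  exact Int.cast_ne_zero.mpr hM

lemma intVec_injective : Function.Injective (intVec (b := b)) :=
  fun _ _ h => funext fun i => Int.cast_injective (congrFun h i)

lemma intVec_mulVec (M : Matrix (Fin b) (Fin b) ℤ) (n : Fin b → ℤ) :
    intVec (M *ᵥ n) = realMat M *ᵥ intVec n := by
  funext i
  simp [intVec, realMat, mulVec, dotProduct]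

lemma projT_eq_zero_iff (x : Fin b → ℝ) : projT b x = 0 ↔ x ∈ latticeZ b :=
  QuotientAddGroup.eq_zero_iff x

lemma projT_surjective : Function.Surjective (projT b) :=
  QuotientAddGroup.mk'_surjective _

lemma inv_mulVec_eq_iff {R : Matrix (Fin b) (Fin b) ℝ} (hR : IsUnit R.det) {x y : Fin b → ℝ} :
    R⁻¹ *ᵥ y = x ↔ y = R *ᵥ x := by
  constructor
  · rintro rfl
    rw [mulVec_mulVec, mul_nonsing_inv _ hR, one_mulVec]
  · rintro rfl
    rw [mulVec_mulVec, nonsing_inv_mul _ hR, one_mulVec]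

noncomputable def projInvMulVec (R : Matrix (Fin b) (Fin b) ℝ) : (Fin b → ℤ) →ₗ[ℤ] Torus b :=
  ((projT b).comp ((mulVecLin R⁻¹).toAddMonoidHom.comp
    ((Int.castAddHom ℝ).compLeft (Fin b)))).toIntLinearMap

lemma projInvMulVec_apply (R : Matrix (Fin b) (Fin b) ℝ) (n : Fin b → ℤ) :
    projInvMulVec R n = projT b (R⁻¹ *ᵥ intVec n) :=
  rfl

lemma ker_projInvMulVec {B : Matrix (Fin b) (Fin b) ℤ} (hB : B.det ≠ 0) :
    LinearMap.ker (projInvMulVec (realMat B)) = LinearMap.range B.mulVecLin := by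
  have hR := isUnit_det_realMat hB
  ext n
  simp only [LinearMap.mem_ker, projInvMulVec_apply, projT_eq_zero_iff, LinearMap.mem_range,
    mulVecLin_apply]
  refine exists_congr fun m => ?_
  rw [eq_comm, inv_mulVec_eq_iff hR, ← intVec_mulVec, intVec_injective.eq_iff, eq_comm]

noncomputable def bowenFranksToTorus (B : Matrix (Fin b) (Fin b) ℤ) (hB : B.det ≠ 0) :
    (Fin b → ℤ) ⧸ LinearMap.range B.mulVecLin →ₗ[ℤ] Torus b :=
  (LinearMap.range B.mulVecLin).liftQ (projInvMulVec (realMat B)) (ker_projInvMulVec hB).ge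

lemma bowenFranksToTorus_mk {B : Matrix (Fin b) (Fin b) ℤ} (hB : B.det ≠ 0) (n : Fin b → ℤ) :
    bowenFranksToTorus B hB (Submodule.Quotient.mk n) = projT b ((realMat B)⁻¹ *ᵥ intVec n) :=
  rfl

lemma bowenFranksToTorus_injective {B : Matrix (Fin b) (Fin b) ℤ} (hB : B.det ≠ 0) :
    Function.Injective (bowenFranksToTorus B hB) :=
  LinearMap.ker_eq_bot.mp <| Submodule.ker_liftQ_eq_bot' _ _ (ker_projInvMulVec hB).symm

lemma range_bowenFranksToTorus {B : Matrix (Fin b) (Fin b) ℤ} (hB : B.det ≠ 0) :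
    Set.range (bowenFranksToTorus B hB) = projT b '' {x | realMat B *ᵥ x ∈ latticeZ b} := by
  have hR := isUnit_det_realMat hB
  rw [← LinearMap.coe_range, bowenFranksToTorus, Submodule.range_liftQ, LinearMap.coe_range]
  ext y
  constructor
  · rintro ⟨n, rfl⟩
    exact ⟨_, ⟨n, ((inv_mulVec_eq_iff hR).mp rfl)⟩, rfl⟩
  · rintro ⟨x, ⟨n, hn⟩, rfl⟩
    exact ⟨n, congrArg (projT b) ((inv_mulVec_eq_iff hR).mpr hn)⟩

variable {Φ : Torus b → Torus b} {M : Matrix (Fin b) (Fin b) ℝ}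

lemma iterate_projT (hΦ : ∀ x, Φ (projT b x) = projT b (M *ᵥ x)) (j : ℕ) (x : Fin b → ℝ) :
    Φ^[j] (projT b x) = projT b (M ^ j *ᵥ x) := by
  induction j generalizing x with
  | zero => simp
  | succ j ih => rw [Function.iterate_succ_apply, hΦ, ih, mulVec_mulVec, ← pow_succ]

lemma setOf_eq_self_eq_image_projT (hΦ : ∀ x, Φ (projT b x) = projT b (M *ᵥ x)) :
    {y | Φ y = y} = projT b '' {x | (M - 1) *ᵥ x ∈ latticeZ b} := by
  ext y
  constructor
  · intro hy
    obtain ⟨x, rfl⟩ := projT_surjective y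
    refine ⟨x, ?_, rfl⟩
    rw [Set.mem_ofPred_eq, sub_mulVec, one_mulVec, ← projT_eq_zero_iff, map_sub, ← hΦ, hy,
      sub_self]
  · rintro ⟨x, hx, rfl⟩
    rw [Set.mem_ofPred_eq, sub_mulVec, one_mulVec, ← projT_eq_zero_iff, map_sub] at hx
    rw [Set.mem_ofPred_eq, hΦ, ← sub_eq_zero, hx]

end BowenFranks

theorem stmt2_general (b : ℕ) (A : Matrix (Fin b) (Fin b) ℤ) (k : ℕ)
    (hdet : (A ^ k - 1).det ≠ 0)
    (Φ : Torus b → Torus b)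
    (hΦ : ∀ x : Fin b → ℝ, Φ (projT b x) = projT b ((realMat A).mulVec x)) :
    ∃ Ψ : ((Fin b → ℤ) ⧸ LinearMap.range (Matrix.mulVecLin (A ^ k - 1))) →+ Torus b,
      Function.Injective Ψ ∧
      (∀ n : Fin b → ℤ, Ψ (Submodule.Quotient.mk n) =
        projT b ((realMat A ^ k - 1)⁻¹.mulVec (intVec n))) ∧
      Set.range Ψ = {y : Torus b | Φ^[k] y = y} ∧
      ∃ H : AddSubgroup (Torus b), (H : Set (Torus b)) = {y : Torus b | Φ^[k] y = y} := by
  set Ψ := bowenFranksToTorus (A ^ k - 1) hdet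
  have hfix : Set.range Ψ = {y | Φ^[k] y = y} := by
    rw [range_bowenFranksToTorus, setOf_eq_self_eq_image_projT (iterate_projT hΦ k),
      realMat_pow_sub_one]
  refine ⟨Ψ.toAddMonoidHom, bowenFranksToTorus_injective hdet, fun n => ?_, hfix,
    Ψ.range.toAddSubgroup, hfix ▸ LinearMap.coe_range Ψ⟩
  rw [← realMat_pow_sub_one]
  exact bowenFranksToTorus_mk hdet n

/-- `Ψ_k : BF_k(A) → 𝕋^b`, `n + Γ_k ↦ (A^k − I)⁻¹ n + ℤ^b`, is a well-defined
injective group homomorphism whose image is exactly `Fix(Φ_A^k)`; in particular `Fix(Φ_A^k)`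
is a subgroup of `𝕋^b` isomorphic to `BF_k(A)`. -/
theorem stmt2 (b : ℕ) (hb : 1 ≤ b) (A : Matrix (Fin b) (Fin b) ℤ) (k : ℕ) (hk : 0 < k)
    (hdet : (A ^ k - 1).det ≠ 0)
    (Φ : Torus b → Torus b)
    (hΦ : ∀ x : Fin b → ℝ, Φ (projT b x) = projT b ((realMat A).mulVec x)) :
    ∃ Ψ : ((Fin b → ℤ) ⧸ LinearMap.range (Matrix.mulVecLin (A ^ k - 1))) →+ Torus b,
      Function.Injective Ψ ∧
      (∀ n : Fin b → ℤ, Ψ (Submodule.Quotient.mk n) =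
        projT b ((realMat A ^ k - 1)⁻¹.mulVec (intVec n))) ∧
      Set.range Ψ = {y : Torus b | Φ^[k] y = y} ∧
      ∃ H : AddSubgroup (Torus b), (H : Set (Torus b)) = {y : Torus b | Φ^[k] y = y} :=
  stmt2_general b A k hdet Φ hΦ
end

section
/- Let f̃ : ℝ^b → ℝ^b be an A-equivariant lift, let k be a positive integer, and suppose f̃^k(x̃) = x̃ + n and A^k ỹ = ỹ + n' with n − n' ∈ (A^k − I)ℤ^b (i.e. the period-k point π(x̃) of f and the period-k point π(ỹ) of Φ_A have the same displacement class in ℤ^b/(A^k − I)ℤ^b). Then there exist m ∈ ℤ^b and a constant K such that ‖f̃^j(x̃) − A^j(ỹ + m)‖ ≤ K for all j ∈ ℕ; that is, the orbit of π(x̃) under f and the orbit of π(ỹ) under Φ_A globally shadow. -/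
open Matrix Filter

/-!
Replacing `ỹ` by `Y = ỹ + w`, where `n - n' = (A^k - I) w`, gives `A^k Y = Y + n`, so `Y` has the
same displacement `n` as `x̃`. By equivariance, `f̃^(j+k)(x̃) = f̃^j(x̃) + A^j n` and
`A^(j+k) Y = A^j Y + A^j n`, so the difference `f̃^j(x̃) - A^j Y` is `k`-periodic in `j`, hence
takes finitely many values and is bounded.
-/

theorem Function.Periodic.exists_norm_le_of_nat {E : Type*} [SeminormedAddGroup E] {g : ℕ → E}
    {k : ℕ} (hg : Function.Periodic g k) (hk : 0 < k) : ∃ K : ℝ, ∀ j, ‖g j‖ ≤ K := by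
  have hrange : Set.range g ⊆ g '' Set.Iio k := by
    rintro _ ⟨j, rfl⟩
    exact ⟨j % k, Nat.mod_lt j hk, hg.map_mod_nat j⟩
  obtain ⟨K, hK⟩ := isBounded_iff_forall_norm_le.mp
    (((Set.finite_Iio k).image g).subset hrange).isBounded
  exact ⟨K, fun j => hK _ ⟨j, rfl⟩⟩

section Lattice

variable {b : ℕ}

theorem intVec_add (u v : Fin b → ℤ) : intVec (u + v) = intVec u + intVec v := by
  funext i; simp [intVec]

theorem realMat_mulVec_intVec (M : Matrix (Fin b) (Fin b) ℤ) (v : Fin b → ℤ) :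
    realMat M *ᵥ intVec v = intVec (M *ᵥ v) := by
  funext i; simp [realMat, intVec, mulVec, dotProduct]

theorem realMat_pow (M : Matrix (Fin b) (Fin b) ℤ) (j : ℕ) : realMat M ^ j = realMat (M ^ j) :=
  (map_pow (Int.castRingHom ℝ).mapMatrix M j).symm

theorem iterate_add_intVec {A : Matrix (Fin b) (Fin b) ℤ} {f : (Fin b → ℝ) → (Fin b → ℝ)}
    (hequiv : ∀ x n, f (x + intVec n) = f x + realMat A *ᵥ intVec n) (j : ℕ) :
    ∀ x n, f^[j] (x + intVec n) = f^[j] x + realMat A ^ j *ᵥ intVec n := by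
  induction j with
  | zero => simp
  | succ j ih =>
    intro x n
    rw [Function.iterate_succ_apply, Function.iterate_succ_apply, hequiv, realMat_mulVec_intVec,
      ih, ← realMat_mulVec_intVec, mulVec_mulVec, ← pow_succ]

theorem pow_mulVec_add_intVec_of_displacement {A : Matrix (Fin b) (Fin b) ℤ} {k : ℕ}
    {y : Fin b → ℝ} {n n' w : Fin b → ℤ} (hy : realMat A ^ k *ᵥ y = y + intVec n')
    (hw : n - n' = (A ^ k - 1) *ᵥ w) :
    realMat A ^ k *ᵥ (y + intVec w) = y + intVec w + intVec n := by
  have hn : n' + A ^ k *ᵥ w = w + n := by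
    rw [sub_mulVec, one_mulVec] at hw
    rw [sub_eq_iff_eq_add'.mp hw]
    abel
  rw [mulVec_add, hy, realMat_pow, realMat_mulVec_intVec, add_assoc, ← intVec_add, hn,
    intVec_add, add_assoc]

theorem periodic_iterate_sub_pow_mulVec {A : Matrix (Fin b) (Fin b) ℤ}
    {f : (Fin b → ℝ) → (Fin b → ℝ)}
    (hequiv : ∀ x n, f (x + intVec n) = f x + realMat A *ᵥ intVec n) {k : ℕ} {x Y : Fin b → ℝ}
    {n : Fin b → ℤ} (hx : f^[k] x = x + intVec n) (hY : realMat A ^ k *ᵥ Y = Y + intVec n) :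
    Function.Periodic (fun j => f^[j] x - realMat A ^ j *ᵥ Y) k := by
  intro j
  simp only [Function.iterate_add_apply, hx, iterate_add_intVec hequiv, pow_add,
    ← mulVec_mulVec, hY, mulVec_add]
  abel

end Lattice

theorem stmt7_general (b : ℕ) (A : Matrix (Fin b) (Fin b) ℤ)
    (f : (Fin b → ℝ) → (Fin b → ℝ))
    (hequiv : ∀ (x : Fin b → ℝ) (n : Fin b → ℤ),
      f (x + intVec n) = f x + (realMat A).mulVec (intVec n))
    (k : ℕ) (hk : 0 < k)
    (x y : Fin b → ℝ) (n n' : Fin b → ℤ)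
    (hx : f^[k] x = x + intVec n)
    (hy : (realMat A ^ k).mulVec y = y + intVec n')
    (w : Fin b → ℤ) (hw : n - n' = (A ^ k - 1).mulVec w) :
    ∃ (m : Fin b → ℤ) (K : ℝ), ∀ j : ℕ,
      ‖f^[j] x - (realMat A ^ j).mulVec (y + intVec m)‖ ≤ K :=
  ⟨w, (periodic_iterate_sub_pow_mulVec hequiv hx
    (pow_mulVec_add_intVec_of_displacement hy hw)).exists_norm_le_of_nat hk⟩

/-- If the period-`k` point of `f` represented by `x̃` and the period-`k` point of
`Φ_A` represented by `ỹ` have the same displacement class in `ℤ^b/(A^k − I)ℤ^b`, then for some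
lift `ỹ + m` the orbits globally shadow: `‖f̃^j(x̃) − A^j(ỹ + m)‖ ≤ K` for all `j`. -/
theorem stmt7 (b : ℕ) (hb : 1 ≤ b) (A : Matrix (Fin b) (Fin b) ℤ)
    (f : (Fin b → ℝ) → (Fin b → ℝ)) (hcont : Continuous f)
    (hequiv : ∀ (x : Fin b → ℝ) (n : Fin b → ℤ),
      f (x + intVec n) = f x + (realMat A).mulVec (intVec n))
    (k : ℕ) (hk : 0 < k)
    (x y : Fin b → ℝ) (n n' : Fin b → ℤ)
    (hx : f^[k] x = x + intVec n)
    (hy : (realMat A ^ k).mulVec y = y + intVec n')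
    (w : Fin b → ℤ) (hw : n - n' = (A ^ k - 1).mulVec w) :
    ∃ (m : Fin b → ℤ) (K : ℝ), ∀ j : ℕ,
      ‖f^[j] x - (realMat A ^ j).mulVec (y + intVec m)‖ ≤ K :=
  stmt7_general b A f hequiv k hk x y n n' hx hy w hw
end

section
/- Let f̃ : ℝ^b → ℝ^b be an A-equivariant lift and suppose A is expanding with constant λ > 1 for the norm ‖·‖. If for some constant K the orbits (x̃, f̃) and (ỹ, A) shadow with constant K (i.e. ‖f̃^n(x̃) − A^n ỹ‖ ≤ K for all n ∈ ℕ), then they shadow with the uniform constant δ(f) = c(f)/(λ − 1), i.e. ‖f̃^n(x̃) − A^n ỹ‖ ≤ c(f)/(λ − 1) for all n ∈ ℕ. -/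
open Matrix Filter

/-! If `g` expands distances by `λ > 1` and `f` stays within `c` of `g`, then the distance
`dₙ` between the orbits `fⁿ x` and `gⁿ y` satisfies `λ dₙ - c ≤ dₙ₊₁`. Hence `dₙ - c/(λ - 1)`
grows at least like `λⁿ` as soon as it is positive, so a bounded `dₙ` never exceeds `c/(λ - 1)`. -/

lemma le_div_sub_one_of_bounded_of_mul_sub_le_succ {d : ℕ → ℝ} {lam c K : ℝ} (hlam : 1 < lam)
    (hstep : ∀ n, lam * d n - c ≤ d (n + 1)) (hK : ∀ n, d n ≤ K) (n : ℕ) :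
    d n ≤ c / (lam - 1) := by
  set δ := c / (lam - 1)
  have hδ : lam * δ - c = δ := by
    simp only [δ]; field_simp [(sub_pos.2 hlam).ne']; ring
  have hgrow : ∀ k, lam ^ k * (d n - δ) ≤ d (n + k) - δ := by
    intro k
    induction k with
    | zero => simp
    | succ k ih =>
      calc lam ^ (k + 1) * (d n - δ) = lam * (lam ^ k * (d n - δ)) := by ring
        _ ≤ lam * (d (n + k) - δ) := by gcongr
        _ = lam * d (n + k) - c - δ := by linarith
        _ ≤ d (n + k + 1) - δ := by linarith [hstep (n + k)]
  by_contra! hn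
  obtain ⟨k, hk⟩ := pow_unbounded_of_one_lt ((K - δ) / (d n - δ)) hlam
  rw [div_lt_iff₀ (sub_pos.2 hn)] at hk
  linarith [hgrow k, hK (n + k)]

lemma dist_iterate_le_of_expanding {X : Type*} [PseudoMetricSpace X] {f g : X → X}
    {lam c K : ℝ} (hlam : 1 < lam) (hg : ∀ u v, lam * dist u v ≤ dist (g u) (g v))
    (hfg : ∀ u, dist (f u) (g u) ≤ c) {x y : X} (hK : ∀ n, dist (f^[n] x) (g^[n] y) ≤ K)
    (n : ℕ) : dist (f^[n] x) (g^[n] y) ≤ c / (lam - 1) := by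
  have hstep : ∀ n, lam * dist (f^[n] x) (g^[n] y) - c ≤ dist (f^[n + 1] x) (g^[n + 1] y) := by
    intro n
    rw [Function.iterate_succ_apply', Function.iterate_succ_apply']
    linarith [hg (f^[n] x) (g^[n] y), hfg (f^[n] x),
      dist_triangle_left (g (f^[n] x)) (g (g^[n] y)) (f (f^[n] x))]
  exact le_div_sub_one_of_bounded_of_mul_sub_le_succ hlam hstep hK n

lemma Matrix.pow_mulVec_eq_iterate {m : Type*} [Fintype m] [DecidableEq m] {R : Type*}
    [CommSemiring R] (M : Matrix m m R) (n : ℕ) (v : m → R) :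
    (M ^ n) *ᵥ v = (M *ᵥ ·)^[n] v := by
  induction n with
  | zero => simp
  | succ n ih => rw [pow_succ', ← mulVec_mulVec, ih, Function.iterate_succ_apply']

theorem stmt8_general (b : ℕ) (A : Matrix (Fin b) (Fin b) ℤ)
    (f : (Fin b → ℝ) → (Fin b → ℝ))
    (lam c : ℝ) (hlam : 1 < lam)
    (hexp : ∀ v : Fin b → ℝ, lam * ‖v‖ ≤ ‖(realMat A).mulVec v‖)
    (hc : ∀ x : Fin b → ℝ, ‖f x - (realMat A).mulVec x‖ ≤ c)
    (x y : Fin b → ℝ) (K : ℝ)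
    (hK : ∀ n : ℕ, ‖f^[n] x - (realMat A ^ n).mulVec y‖ ≤ K) :
    ∀ n : ℕ, ‖f^[n] x - (realMat A ^ n).mulVec y‖ ≤ c / (lam - 1) := by
  have hexpands : ∀ u v, lam * dist u v ≤ dist (realMat A *ᵥ u) (realMat A *ᵥ v) := by
    intro u v
    simpa only [dist_eq_norm, ← mulVec_sub] using hexp (u - v)
  intro n
  simp only [Matrix.pow_mulVec_eq_iterate, ← dist_eq_norm] at hK ⊢
  exact dist_iterate_le_of_expanding hlam hexpands (by simpa only [dist_eq_norm] using hc) hK n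

/-- If the orbits `(x̃, f̃)` and `(ỹ, A)` shadow with some constant `K`, then they
shadow with the uniform constant `δ(f) = c(f)/(λ − 1)`. -/
theorem stmt8 (b : ℕ) (hb : 1 ≤ b) (A : Matrix (Fin b) (Fin b) ℤ)
    (f : (Fin b → ℝ) → (Fin b → ℝ)) (hcont : Continuous f)
    (hequiv : ∀ (x : Fin b → ℝ) (n : Fin b → ℤ),
      f (x + intVec n) = f x + (realMat A).mulVec (intVec n))
    (lam c : ℝ) (hlam : 1 < lam) (hA : (realMat A).det ≠ 0)
    (hexp : ∀ v : Fin b → ℝ, lam * ‖v‖ ≤ ‖(realMat A).mulVec v‖)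
    (hc : ∀ x : Fin b → ℝ, ‖f x - (realMat A).mulVec x‖ ≤ c)
    (x y : Fin b → ℝ) (K : ℝ)
    (hK : ∀ n : ℕ, ‖f^[n] x - (realMat A ^ n).mulVec y‖ ≤ K) :
    ∀ n : ℕ, ‖f^[n] x - (realMat A ^ n).mulVec y‖ ≤ c / (lam - 1) :=
  stmt8_general b A f lam c hlam hexp hc x y K hK
end

section
/- Let f̃ : ℝ^b → ℝ^b be an A-equivariant lift and suppose A is expanding with constant λ > 1 for the norm ‖·‖. Then for every x̃ ∈ ℝ^b there exists a unique ỹ ∈ ℝ^b such that ‖f̃^i(x̃) − A^i ỹ‖ ≤ δ(f) = c(f)/(λ − 1) for all i ∈ ℕ. -/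
/-!
The orbit `Aⁱ y` shadowing `f̃ⁱ(x̃)` is `y = lim A⁻ⁿ f̃ⁿ(x̃)`: since `A⁻¹` contracts by `λ⁻¹`, consecutive
terms differ by at most `c λ⁻⁽ⁿ⁺¹⁾`, and summing the geometric tail gives the bound `c / (λ - 1)`.
Two shadowing orbits stay within `2δ` of each other while `Aⁱ` stretches their distance by `λⁱ`,
so they coincide.
-/

open Matrix Filter

namespace Equiv

def pullback {X : Type*} (T : X ≃ X) (p : ℕ → X) (n : ℕ) : X := T.symm^[n] (p n)

theorem pullback_add {X : Type*} (T : X ≃ X) (p : ℕ → X) (i n : ℕ) :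
    pullback T p (n + i) = T.symm^[i] (pullback T (fun k => p (k + i)) n) := by
  rw [pullback, pullback, add_comm n i, Function.iterate_add_apply]

variable {X : Type*} [MetricSpace X] {T : X ≃ X} {lam : ℝ}

theorem dist_symm_iterate_le (hexp : ∀ x y, lam * dist x y ≤ dist (T x) (T y)) (hlam : 0 < lam)
    (n : ℕ) (x y : X) : dist (T.symm^[n] x) (T.symm^[n] y) ≤ lam⁻¹ ^ n * dist x y := by
  induction n generalizing x y with
  | zero => simp
  | succ n ih =>
    have hstep : dist (T.symm x) (T.symm y) ≤ lam⁻¹ * dist x y := by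
      rw [inv_mul_eq_div, le_div_iff₀' hlam]
      simpa using hexp (T.symm x) (T.symm y)
    calc dist (T.symm^[n + 1] x) (T.symm^[n + 1] y)
        ≤ lam⁻¹ ^ n * dist (T.symm x) (T.symm y) := ih _ _
      _ ≤ lam⁻¹ ^ n * (lam⁻¹ * dist x y) := by gcongr
      _ = lam⁻¹ ^ (n + 1) * dist x y := by ring

theorem pow_mul_dist_le_dist_iterate (hexp : ∀ x y, lam * dist x y ≤ dist (T x) (T y))
    (hlam : 0 ≤ lam) (n : ℕ) (x y : X) : lam ^ n * dist x y ≤ dist (T^[n] x) (T^[n] y) := by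
  induction n with
  | zero => simp
  | succ n ih =>
    calc lam ^ (n + 1) * dist x y = lam * (lam ^ n * dist x y) := by ring
      _ ≤ lam * dist (T^[n] x) (T^[n] y) := by gcongr
      _ ≤ dist (T^[n + 1] x) (T^[n + 1] y) := by
        simpa only [Function.iterate_succ_apply'] using hexp _ _

variable {c : ℝ} {p : ℕ → X}

theorem dist_pullback_succ_le (hexp : ∀ x y, lam * dist x y ≤ dist (T x) (T y)) (hlam : 0 < lam)
    (hp : ∀ n, dist (p (n + 1)) (T (p n)) ≤ c) (n : ℕ) :
    dist (pullback T p n) (pullback T p (n + 1)) ≤ c * lam⁻¹ * lam⁻¹ ^ n := by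
  have hback : pullback T p n = T.symm^[n + 1] (T (p n)) := by
    rw [pullback, Function.iterate_succ_apply, symm_apply_apply]
  calc dist (pullback T p n) (pullback T p (n + 1))
      ≤ lam⁻¹ ^ (n + 1) * dist (T (p n)) (p (n + 1)) := by
        rw [hback]; exact dist_symm_iterate_le hexp hlam _ _ _
    _ ≤ lam⁻¹ ^ (n + 1) * c := by rw [dist_comm]; gcongr; exact hp n
    _ = c * lam⁻¹ * lam⁻¹ ^ n := by ring

theorem dist_le_of_tendsto_pullback (hexp : ∀ x y, lam * dist x y ≤ dist (T x) (T y))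
    (hlam : 1 < lam) (hp : ∀ n, dist (p (n + 1)) (T (p n)) ≤ c) {y : X}
    (hy : Tendsto (pullback T p) atTop (nhds y)) : dist (p 0) y ≤ c / (lam - 1) := by
  have hlam0 : 0 < lam := by linarith
  have h := dist_le_of_le_geometric_of_tendsto₀ _ _ (inv_lt_one_of_one_lt₀ hlam)
    (dist_pullback_succ_le hexp hlam0 hp) hy
  have hfrac : c * lam⁻¹ / (1 - lam⁻¹) = c / (lam - 1) := by
    field_simp
  simpa [pullback, hfrac] using h

theorem eq_of_forall_dist_iterate_le (hexp : ∀ x y, lam * dist x y ≤ dist (T x) (T y))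
    (hlam : 1 < lam) {δ : ℝ} {y z : X} (hy : ∀ n, dist (p n) (T^[n] y) ≤ δ)
    (hz : ∀ n, dist (p n) (T^[n] z) ≤ δ) : y = z := by
  by_contra hne
  have hpos : 0 < dist y z := dist_pos.mpr hne
  obtain ⟨n, hn⟩ := pow_unbounded_of_one_lt (2 * δ / dist y z) hlam
  have hgrow : lam ^ n * dist y z ≤ 2 * δ :=
    calc lam ^ n * dist y z ≤ dist (T^[n] y) (T^[n] z) :=
          pow_mul_dist_le_dist_iterate hexp (by linarith) n y z
      _ ≤ dist (p n) (T^[n] y) + dist (p n) (T^[n] z) := dist_triangle_left _ _ _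
      _ ≤ 2 * δ := by linarith [hy n, hz n]
  rw [div_lt_iff₀ hpos] at hn
  linarith

theorem existsUnique_shadow [CompleteSpace X] (hexp : ∀ x y, lam * dist x y ≤ dist (T x) (T y))
    (hlam : 1 < lam) (hp : ∀ n, dist (p (n + 1)) (T (p n)) ≤ c) :
    ∃! y, ∀ n, dist (p n) (T^[n] y) ≤ c / (lam - 1) := by
  have hlam0 : 0 < lam := by linarith
  have hlim : ∀ q : ℕ → X, (∀ n, dist (q (n + 1)) (T (q n)) ≤ c) →
      ∃ y, Tendsto (pullback T q) atTop (nhds y) := fun q hq =>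
    cauchySeq_tendsto_of_complete <|
      cauchySeq_of_le_geometric _ _ (inv_lt_one_of_one_lt₀ hlam) (dist_pullback_succ_le hexp hlam0 hq)
  obtain ⟨y, hy⟩ := hlim p hp
  have hshift : ∀ i n, dist (p (n + 1 + i)) (T (p (n + i))) ≤ c := fun i n => by
    rw [Nat.add_right_comm]; exact hp (n + i)
  have hshadow : ∀ i, dist (p i) (T^[i] y) ≤ c / (lam - 1) := by
    intro i
    -- `T` need not be continuous, so `T^[i] y` is reached as the limit for the shifted
    -- pseudo-orbit, through the Lipschitz map `T.symm^[i]`.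
    obtain ⟨yi, hyi⟩ := hlim (fun k => p (k + i)) (hshift i)
    have hcont : Continuous T.symm^[i] :=
      (LipschitzWith.of_dist_le_mul (K := ⟨lam⁻¹ ^ i, by positivity⟩)
        (dist_symm_iterate_le hexp hlam0 i)).continuous
    have hback : T.symm^[i] yi = y := by
      refine tendsto_nhds_unique ((hcont.tendsto yi).comp hyi) ?_
      simpa only [Function.comp_def, pullback_add] using hy.comp (tendsto_add_atTop_nat i)
    rw [← hback, Function.LeftInverse.iterate T.apply_symm_apply i yi]
    simpa using dist_le_of_tendsto_pullback hexp hlam (hshift i) hyi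
  exact ⟨y, hshadow, fun z hz => eq_of_forall_dist_iterate_le hexp hlam hz hshadow⟩

end Equiv

theorem Matrix.iterate_mulVec {n : Type*} [Fintype n] [DecidableEq n] {R : Type*} [CommSemiring R]
    (M : Matrix n n R) (k : ℕ) : (M.mulVec)^[k] = (M ^ k).mulVec := by
  funext v
  rw [← toLin'_apply, toLin'_pow, Module.End.pow_apply]
  rfl

theorem stmt9_general (b : ℕ) (A : Matrix (Fin b) (Fin b) ℤ)
    (f : (Fin b → ℝ) → (Fin b → ℝ))
    (lam c : ℝ) (hlam : 1 < lam)
    (hexp : ∀ v : Fin b → ℝ, lam * ‖v‖ ≤ ‖(realMat A).mulVec v‖)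
    (hc : ∀ x : Fin b → ℝ, ‖f x - (realMat A).mulVec x‖ ≤ c)
    (x : Fin b → ℝ) :
    ∃! y : Fin b → ℝ, ∀ i : ℕ,
      ‖f^[i] x - (realMat A ^ i).mulVec y‖ ≤ c / (lam - 1) := by
  have hdist : ∀ v w, lam * dist v w ≤ dist ((realMat A).mulVec v) ((realMat A).mulVec w) := by
    intro v w
    simpa only [dist_eq_norm, ← mulVec_sub] using hexp (v - w)
  have hinj : Function.Injective (toLin' (realMat A)) := fun v w hvw => by
    have := hdist v w
    simp only [toLin'_apply] at hvw
    rw [hvw, dist_self] at this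
    exact dist_le_zero.mp (nonpos_of_mul_nonpos_right this (by linarith))
  let T := (LinearEquiv.ofInjectiveEndo _ hinj).toEquiv
  have hT : ⇑T = (realMat A).mulVec := funext fun v => toLin'_apply _ v
  simp_rw [← Matrix.iterate_mulVec, ← hT, ← dist_eq_norm]
  refine Equiv.existsUnique_shadow (hT ▸ hdist) hlam fun n => ?_
  rw [hT, Function.iterate_succ_apply', dist_eq_norm]
  exact hc _

/-- For every `x̃ ∈ ℝ^b` there is a unique `ỹ ∈ ℝ^b` such that
`‖f̃^i(x̃) − A^i ỹ‖ ≤ δ(f) = c(f)/(λ − 1)` for all `i ∈ ℕ`. -/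
theorem stmt9 (b : ℕ) (hb : 1 ≤ b) (A : Matrix (Fin b) (Fin b) ℤ)
    (f : (Fin b → ℝ) → (Fin b → ℝ)) (hcont : Continuous f)
    (hequiv : ∀ (x : Fin b → ℝ) (n : Fin b → ℤ),
      f (x + intVec n) = f x + (realMat A).mulVec (intVec n))
    (lam c : ℝ) (hlam : 1 < lam) (hA : (realMat A).det ≠ 0)
    (hexp : ∀ v : Fin b → ℝ, lam * ‖v‖ ≤ ‖(realMat A).mulVec v‖)
    (hc : ∀ x : Fin b → ℝ, ‖f x - (realMat A).mulVec x‖ ≤ c)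
    (x : Fin b → ℝ) :
    ∃! y : Fin b → ℝ, ∀ i : ℕ,
      ‖f^[i] x - (realMat A ^ i).mulVec y‖ ≤ c / (lam - 1) :=
  stmt9_general b A f lam c hlam hexp hc x
end

section
/- Let f̃ : ℝ^b → ℝ^b be an A-equivariant lift with A expanding with constant λ > 1 for the norm ‖·‖, and assume in addition that f̃ is Lipschitz with constant L > 1. Then for every ν with 0 < ν < min(log λ / log L, 1), the bounded function σ_∞(x̃) = β̃(x̃) − x̃ is ν-Hölder continuous on ℝ^b; that is, there is a constant C with ‖σ_∞(x̃) − σ_∞(ỹ)‖ ≤ C ‖x̃ − ỹ‖^ν for all x̃, ỹ. -/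
/-! The Franks map is the limit of `g N = A⁻ᴺ f̃ᴺ`, and `‖g N - β‖ ≤ c / (λ - 1) · λ⁻ᴺ` because
consecutive terms differ by `A⁻ⁿ⁻¹ σ(f̃ⁿ x)`, while `g N` is `(L / λ)ᴺ`-Lipschitz. For
`d = ‖x - y‖ ≤ 1` choose the largest `N` with `Lᴺ d ≤ 1`: then `‖β x - β y‖ = O(λ⁻ᴺ)` and
`λ⁻ᴺ = O(d ^ (log λ / log L))`. At scales `d ≥ 1` it suffices that `σ_∞` is bounded. -/

open Matrix Filter

open Topology

section Franks

variable {ι : Type*} [Fintype ι] [DecidableEq ι] {M : Matrix ι ι ℝ} {lam : ℝ}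

theorem Matrix.norm_inv_pow_mulVec_le (hlam : 0 < lam) (hM : IsUnit M.det)
    (hexp : ∀ v : ι → ℝ, lam * ‖v‖ ≤ ‖M *ᵥ v‖) (n : ℕ) (v : ι → ℝ) :
    ‖(M⁻¹ ^ n) *ᵥ v‖ ≤ lam⁻¹ ^ n * ‖v‖ := by
  have hstep : ∀ w, ‖M⁻¹ *ᵥ w‖ ≤ lam⁻¹ * ‖w‖ := fun w => by
    have := hexp (M⁻¹ *ᵥ w)
    rw [mulVec_mulVec, mul_nonsing_inv M hM, one_mulVec] at this
    rw [inv_mul_eq_div, le_div_iff₀ hlam]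
    linarith
  induction n with
  | zero => simp
  | succ n ih =>
    calc ‖(M⁻¹ ^ (n + 1)) *ᵥ v‖ = ‖M⁻¹ *ᵥ (M⁻¹ ^ n) *ᵥ v‖ := by rw [pow_succ', mulVec_mulVec]
      _ ≤ lam⁻¹ * (lam⁻¹ ^ n * ‖v‖) := (hstep _).trans (by gcongr)
      _ = lam⁻¹ ^ (n + 1) * ‖v‖ := by ring

theorem Matrix.norm_inv_pow_mulVec_iterate_sub_iterate_le {f : (ι → ℝ) → ι → ℝ} {L : ℝ}
    (hlam : 0 < lam) (hM : IsUnit M.det) (hexp : ∀ v : ι → ℝ, lam * ‖v‖ ≤ ‖M *ᵥ v‖)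
    (hL : 0 ≤ L) (hLip : ∀ x y, ‖f x - f y‖ ≤ L * ‖x - y‖) (n : ℕ) (x y : ι → ℝ) :
    ‖(M⁻¹ ^ n) *ᵥ f^[n] x - (M⁻¹ ^ n) *ᵥ f^[n] y‖ ≤ lam⁻¹ ^ n * (L ^ n * ‖x - y‖) := by
  have hf : LipschitzWith L.toNNReal f :=
    LipschitzWith.of_dist_le' fun x y => by simpa only [dist_eq_norm] using hLip x y
  rw [← mulVec_sub]
  refine (norm_inv_pow_mulVec_le hlam hM hexp n _).trans ?_
  gcongr
  simpa [dist_eq_norm, Real.coe_toNNReal _ hL] using (hf.iterate n).dist_le_mul x y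

theorem Matrix.norm_inv_pow_mulVec_iterate_sub_le_of_tendsto {f : (ι → ℝ) → ι → ℝ} {c : ℝ}
    (hlam : 1 < lam) (hM : IsUnit M.det) (hexp : ∀ v : ι → ℝ, lam * ‖v‖ ≤ ‖M *ᵥ v‖)
    (hc : ∀ x, ‖f x - M *ᵥ x‖ ≤ c) {x β : ι → ℝ}
    (hβ : Tendsto (fun n : ℕ => (M⁻¹ ^ n) *ᵥ f^[n] x) atTop (𝓝 β)) (n : ℕ) :
    ‖(M⁻¹ ^ n) *ᵥ f^[n] x - β‖ ≤ c / (lam - 1) * lam⁻¹ ^ n := by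
  have hlam0 : 0 < lam := one_pos.trans hlam
  have hstep : ∀ n : ℕ, dist ((M⁻¹ ^ n) *ᵥ f^[n] x) ((M⁻¹ ^ (n + 1)) *ᵥ f^[n + 1] x)
      ≤ c * lam⁻¹ * lam⁻¹ ^ n := fun n => by
    have hsucc : (M⁻¹ ^ (n + 1)) *ᵥ f^[n + 1] x - (M⁻¹ ^ n) *ᵥ f^[n] x
        = (M⁻¹ ^ (n + 1)) *ᵥ (f (f^[n] x) - M *ᵥ f^[n] x) := by
      rw [Function.iterate_succ_apply', mulVec_sub, mulVec_mulVec, pow_succ, mul_assoc,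
        nonsing_inv_mul M hM, mul_one]
    rw [dist_comm, dist_eq_norm, hsucc]
    calc _ ≤ lam⁻¹ ^ (n + 1) * ‖f (f^[n] x) - M *ᵥ f^[n] x‖ :=
          norm_inv_pow_mulVec_le hlam0 hM hexp _ _
      _ ≤ lam⁻¹ ^ (n + 1) * c := by gcongr; exact hc _
      _ = c * lam⁻¹ * lam⁻¹ ^ n := by ring
  have := dist_le_of_le_geometric_of_tendsto _ _ (inv_lt_one_of_one_lt₀ hlam) hstep hβ n
  rw [dist_eq_norm] at this
  convert this using 1
  field_simp

end Franks

theorem exists_pow_mul_le_one_and_inv_pow_le_mul_rpow {L lam d ν : ℝ} (hL : 1 < L)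
    (hlam : 1 < lam) (hd0 : 0 < d) (hd1 : d ≤ 1) (hν : ν ≤ Real.log lam / Real.log L) :
    ∃ N : ℕ, L ^ N * d ≤ 1 ∧ lam⁻¹ ^ N ≤ lam * d ^ ν := by
  have hlogL : 0 < Real.log L := Real.log_pos hL
  have hloglam : 0 < Real.log lam := Real.log_pos hlam
  have hlogd : Real.log d ≤ 0 := Real.log_nonpos hd0.le hd1
  -- `N` is the largest natural number with `L ^ N * d ≤ 1`.
  set s := -Real.log d / Real.log L
  refine ⟨⌊s⌋₊, ?_, ?_⟩
  · have hN : (⌊s⌋₊ : ℝ) * Real.log L ≤ -Real.log d :=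
      (le_div_iff₀ hlogL).1 (Nat.floor_le (div_nonneg (neg_nonneg.2 hlogd) hlogL.le))
    rw [← Real.log_nonpos_iff (by positivity), Real.log_mul (by positivity) hd0.ne',
      Real.log_pow]
    linarith
  · have hN : -Real.log d < (⌊s⌋₊ + 1) * Real.log L :=
      (div_lt_iff₀ hlogL).1 (Nat.lt_floor_add_one s)
    have hνt : ν * -Real.log d ≤ Real.log lam / Real.log L * -Real.log d :=
      mul_le_mul_of_nonneg_right hν (neg_nonneg.2 hlogd)
    have ht : Real.log lam / Real.log L * -Real.log d ≤ (⌊s⌋₊ + 1) * Real.log lam := by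
      rw [div_mul_eq_mul_div, div_le_iff₀ hlogL]
      nlinarith
    rw [← Real.log_le_log_iff (by positivity) (by positivity), Real.log_pow, Real.log_inv,
      Real.log_mul (by positivity) (by positivity), Real.log_rpow hd0]
    linarith

theorem norm_sub_le_mul_rpow_of_approx {E F : Type*} [NormedAddCommGroup E]
    [SeminormedAddCommGroup F] {β : E → F} {g : ℕ → E → F} {K L lam ν : ℝ} (hL : 1 < L)
    (hlam : 1 < lam) (hν : ν ≤ Real.log lam / Real.log L)
    (htail : ∀ N x, ‖g N x - β x‖ ≤ K * lam⁻¹ ^ N)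
    (hlip : ∀ N x y, ‖g N x - g N y‖ ≤ lam⁻¹ ^ N * (L ^ N * ‖x - y‖))
    {x y : E} (hxy : ‖x - y‖ ≤ 1) :
    ‖β x - β y‖ ≤ lam * (2 * K + 1) * ‖x - y‖ ^ ν := by
  have hK : 0 ≤ K := by simpa using (norm_nonneg _).trans (htail 0 x)
  rcases (norm_nonneg (x - y)).eq_or_lt with hxy0 | hxy0
  · rw [norm_sub_rev, sub_eq_zero.1 (norm_eq_zero.1 hxy0.symm), sub_self, norm_zero]
    positivity
  obtain ⟨N, hLN, hlamN⟩ := exists_pow_mul_le_one_and_inv_pow_le_mul_rpow hL hlam hxy0 hxy hν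
  have hdrift : lam⁻¹ ^ N * (L ^ N * ‖x - y‖) ≤ lam⁻¹ ^ N := by
    simpa using mul_le_mul_of_nonneg_left hLN (by positivity : (0 : ℝ) ≤ lam⁻¹ ^ N)
  calc ‖β x - β y‖ ≤ ‖g N x - β x‖ + ‖g N x - g N y‖ + ‖g N y - β y‖ := by
        have h₁ := norm_sub_le_norm_sub_add_norm_sub (β x) (g N x) (β y)
        have h₂ := norm_sub_le_norm_sub_add_norm_sub (g N x) (g N y) (β y)
        rw [norm_sub_rev (β x) (g N x)] at h₁
        linarith
    _ ≤ (2 * K + 1) * lam⁻¹ ^ N := by linarith [htail N x, htail N y, hlip N x y]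
    _ ≤ lam * (2 * K + 1) * ‖x - y‖ ^ ν := by nlinarith

theorem norm_sub_le_mul_rpow_of_bounded {E F : Type*} [SeminormedAddCommGroup E]
    [SeminormedAddCommGroup F] {h : E → F} {C K ν : ℝ} (hν : 0 ≤ ν) (hK : ∀ x, ‖h x‖ ≤ K)
    (hloc : ∀ x y, ‖x - y‖ ≤ 1 → ‖h x - h y‖ ≤ C * ‖x - y‖ ^ ν) (x y : E) :
    ‖h x - h y‖ ≤ max C (2 * K) * ‖x - y‖ ^ ν := by
  rcases le_total ‖x - y‖ 1 with hxy | hxy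
  · exact (hloc x y hxy).trans (by gcongr; exact le_max_left _ _)
  · have hK0 : 0 ≤ K := (norm_nonneg _).trans (hK x)
    calc ‖h x - h y‖ ≤ 2 * K := by linarith [norm_sub_le (h x) (h y), hK x, hK y]
      _ ≤ max C (2 * K) * ‖x - y‖ ^ ν := by
        have := Real.one_le_rpow hxy hν
        nlinarith [le_max_right C (2 * K)]

theorem stmt12_general (b : ℕ) (A : Matrix (Fin b) (Fin b) ℤ)
    (f : (Fin b → ℝ) → (Fin b → ℝ))
    (lam c : ℝ) (hlam : 1 < lam) (hA : (realMat A).det ≠ 0)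
    (hexp : ∀ v : Fin b → ℝ, lam * ‖v‖ ≤ ‖(realMat A).mulVec v‖)
    (hc : ∀ x : Fin b → ℝ, ‖f x - (realMat A).mulVec x‖ ≤ c)
    (L : ℝ) (hL : 1 < L)
    (hLip : ∀ x y : Fin b → ℝ, ‖f x - f y‖ ≤ L * ‖x - y‖)
    (β : (Fin b → ℝ) → (Fin b → ℝ))
    (hβ : ∀ x : Fin b → ℝ, Tendsto (fun n : ℕ => ((realMat A)⁻¹ ^ n).mulVec (f^[n] x))
      atTop (nhds (β x)))
    (ν : ℝ) (hν0 : 0 < ν) (hν : ν < min (Real.log lam / Real.log L) 1) :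
    ∃ C : ℝ, ∀ x y : Fin b → ℝ, ‖(β x - x) - (β y - y)‖ ≤ C * ‖x - y‖ ^ ν := by
  have hM : IsUnit (realMat A).det := isUnit_iff_ne_zero.2 hA
  set K := c / (lam - 1)
  have htail : ∀ N x, ‖((realMat A)⁻¹ ^ N) *ᵥ f^[N] x - β x‖ ≤ K * lam⁻¹ ^ N :=
    fun N x => Matrix.norm_inv_pow_mulVec_iterate_sub_le_of_tendsto hlam hM hexp hc (hβ x) N
  have hlip := Matrix.norm_inv_pow_mulVec_iterate_sub_iterate_le (one_pos.trans hlam) hM hexp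
    (zero_le_one.trans hL.le) hLip
  have hbdd : ∀ x, ‖β x - x‖ ≤ K := fun x => by simpa [norm_sub_rev] using htail 0 x
  have hloc : ∀ x y : Fin b → ℝ, ‖x - y‖ ≤ 1 →
      ‖(β x - x) - (β y - y)‖ ≤ (lam * (2 * K + 1) + 1) * ‖x - y‖ ^ ν := fun x y hxy =>
    calc ‖(β x - x) - (β y - y)‖ ≤ ‖β x - β y‖ + ‖x - y‖ := by
          rw [sub_sub_sub_comm]; exact norm_sub_le _ _
      _ ≤ lam * (2 * K + 1) * ‖x - y‖ ^ ν + ‖x - y‖ ^ ν := add_le_add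
          (norm_sub_le_mul_rpow_of_approx hL hlam (hν.le.trans (min_le_left _ _)) htail hlip hxy)
          (Real.self_le_rpow_of_le_one (norm_nonneg _) hxy (hν.le.trans (min_le_right _ _)))
      _ = (lam * (2 * K + 1) + 1) * ‖x - y‖ ^ ν := by ring
  exact ⟨_, norm_sub_le_mul_rpow_of_bounded (h := fun x => β x - x) hν0.le hbdd hloc⟩

/-- If in addition `f̃` is Lipschitz with constant `L > 1`, then for every
`0 < ν < min(log λ / log L, 1)` the bounded function `σ_∞(x̃) = β̃(x̃) − x̃` is ν-Hölder. -/
theorem stmt12 (b : ℕ) (hb : 1 ≤ b) (A : Matrix (Fin b) (Fin b) ℤ)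
    (f : (Fin b → ℝ) → (Fin b → ℝ)) (hcont : Continuous f)
    (hequiv : ∀ (x : Fin b → ℝ) (n : Fin b → ℤ),
      f (x + intVec n) = f x + (realMat A).mulVec (intVec n))
    (lam c : ℝ) (hlam : 1 < lam) (hA : (realMat A).det ≠ 0)
    (hexp : ∀ v : Fin b → ℝ, lam * ‖v‖ ≤ ‖(realMat A).mulVec v‖)
    (hc : ∀ x : Fin b → ℝ, ‖f x - (realMat A).mulVec x‖ ≤ c)
    (L : ℝ) (hL : 1 < L)
    (hLip : ∀ x y : Fin b → ℝ, ‖f x - f y‖ ≤ L * ‖x - y‖)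
    (β : (Fin b → ℝ) → (Fin b → ℝ))
    (hβ : ∀ x : Fin b → ℝ, Tendsto (fun n : ℕ => ((realMat A)⁻¹ ^ n).mulVec (f^[n] x))
      atTop (nhds (β x)))
    (ν : ℝ) (hν0 : 0 < ν) (hν : ν < min (Real.log lam / Real.log L) 1) :
    ∃ C : ℝ, ∀ x y : Fin b → ℝ, ‖(β x - x) - (β y - y)‖ ≤ C * ‖x - y‖ ^ ν :=
  stmt12_general b A f lam c hlam hA hexp hc L hL hLip β hβ ν hν0 hν
end

section
/- Let f̃ : ℝ^b → ℝ^b be an A-equivariant lift with A expanding with constant λ > 1 for the norm ‖·‖. Then for x̃, ỹ ∈ ℝ^b, the orbits (x̃, f̃) and (ỹ, A) shadow with some constant K (i.e. sup_{n∈ℕ} ‖f̃^n(x̃) − A^n ỹ‖ < ∞) if and only if ỹ = β̃(x̃). In particular, β̃ coincides with the map α̃ that assigns to x̃ the unique point whose A-orbit δ(f)-shadows the f̃-orbit of x̃. -/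
open Matrix Filter

/-!
Since `A⁻¹` contracts by `λ⁻¹` and `f̃` moves points by at most `c` from `A`, consecutive terms of
`A⁻ⁿ f̃ⁿ(x̃)` differ by at most `c λ^{-(n+1)}`, so `‖x̃ - β̃(x̃)‖ ≤ c / (λ - 1)`. Passing to the limit in
`A⁻ⁿ f̃ⁿ(f̃ x̃) = A (A^{-(n+1)} f̃^{n+1}(x̃))` gives `β̃ ∘ f̃ = A ∘ β̃`, hence
`‖f̃ⁿ(x̃) - Aⁿ β̃(x̃)‖ = ‖f̃ⁿ(x̃) - β̃(f̃ⁿ(x̃))‖ ≤ c / (λ - 1)`. Conversely, if `‖f̃ⁿ(x̃) - Aⁿ ỹ‖ ≤ K`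
then `‖A⁻ⁿ f̃ⁿ(x̃) - ỹ‖ ≤ K λ⁻ⁿ → 0`, so `ỹ = β̃(x̃)`.
-/

namespace Matrix

variable {n : Type*} [Fintype n] [DecidableEq n] {M : Matrix n n ℝ} {lam : ℝ}

lemma inv_pow_mul_pow_of_isUnit_det (hM : IsUnit M.det) (k : ℕ) : M⁻¹ ^ k * M ^ k = 1 := by
  rw [inv_pow', nonsing_inv_mul _ (by rw [det_pow]; exact hM.pow k)]

lemma norm_inv_pow_mulVec_le_s13 (hM : IsUnit M.det) (hlam : 0 < lam)
    (hexp : ∀ v : n → ℝ, lam * ‖v‖ ≤ ‖M *ᵥ v‖) (k : ℕ) (v : n → ℝ) :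
    ‖(M⁻¹ ^ k) *ᵥ v‖ ≤ lam⁻¹ ^ k * ‖v‖ := by
  have hinv : ∀ w : n → ℝ, ‖M⁻¹ *ᵥ w‖ ≤ lam⁻¹ * ‖w‖ := fun w => by
    rw [le_inv_mul_iff₀ hlam]
    simpa [mulVec_mulVec, mul_nonsing_inv _ hM] using hexp (M⁻¹ *ᵥ w)
  induction k generalizing v with
  | zero => simp
  | succ k ih =>
    calc ‖(M⁻¹ ^ (k + 1)) *ᵥ v‖ = ‖(M⁻¹ ^ k) *ᵥ (M⁻¹ *ᵥ v)‖ := by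
          rw [mulVec_mulVec, pow_succ]
      _ ≤ lam⁻¹ ^ k * ‖M⁻¹ *ᵥ v‖ := ih _
      _ ≤ lam⁻¹ ^ k * (lam⁻¹ * ‖v‖) := by grw [hinv v]
      _ = lam⁻¹ ^ (k + 1) * ‖v‖ := by ring

lemma tendsto_inv_pow_mulVec_of_norm_sub_pow_mulVec_le (hM : IsUnit M.det) (hlam : 1 < lam)
    (hexp : ∀ v : n → ℝ, lam * ‖v‖ ≤ ‖M *ᵥ v‖) {u : ℕ → n → ℝ} {y : n → ℝ} {K : ℝ}
    (hK : ∀ k, ‖u k - (M ^ k) *ᵥ y‖ ≤ K) :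
    Tendsto (fun k => (M⁻¹ ^ k) *ᵥ u k) atTop (nhds y) := by
  have hlam0 : 0 < lam := zero_lt_one.trans hlam
  have hbound : ∀ k, ‖(M⁻¹ ^ k) *ᵥ u k - y‖ ≤ K * lam⁻¹ ^ k := fun k =>
    calc ‖(M⁻¹ ^ k) *ᵥ u k - y‖ = ‖(M⁻¹ ^ k) *ᵥ (u k - (M ^ k) *ᵥ y)‖ := by
          rw [mulVec_sub, mulVec_mulVec, inv_pow_mul_pow_of_isUnit_det hM, one_mulVec]
      _ ≤ lam⁻¹ ^ k * K := by
          grw [norm_inv_pow_mulVec_le_s13 hM hlam0 hexp, hK]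
      _ = K * lam⁻¹ ^ k := mul_comm _ _
  have hgeom : Tendsto (fun k => K * lam⁻¹ ^ k) atTop (nhds 0) := by
    simpa using (tendsto_pow_atTop_nhds_zero_of_lt_one (inv_nonneg.2 hlam0.le)
      (inv_lt_one_of_one_lt₀ hlam)).const_mul K
  exact tendsto_iff_norm_sub_tendsto_zero.2 (squeeze_zero (fun _ => norm_nonneg _) hbound hgeom)

variable {f : (n → ℝ) → (n → ℝ)} {c : ℝ}

lemma dist_inv_pow_mulVec_iterate_succ_le (hM : IsUnit M.det) (hlam : 0 < lam)
    (hexp : ∀ v : n → ℝ, lam * ‖v‖ ≤ ‖M *ᵥ v‖) (hc : ∀ x, ‖f x - M *ᵥ x‖ ≤ c)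
    (z : n → ℝ) (k : ℕ) :
    dist ((M⁻¹ ^ k) *ᵥ f^[k] z) ((M⁻¹ ^ (k + 1)) *ᵥ f^[k + 1] z) ≤ c * lam⁻¹ * lam⁻¹ ^ k := by
  have hpow : M⁻¹ ^ (k + 1) * M = M⁻¹ ^ k := by
    rw [pow_succ, mul_assoc, nonsing_inv_mul _ hM, mul_one]
  calc dist ((M⁻¹ ^ k) *ᵥ f^[k] z) ((M⁻¹ ^ (k + 1)) *ᵥ f^[k + 1] z)
      = ‖(M⁻¹ ^ (k + 1)) *ᵥ (f (f^[k] z) - M *ᵥ f^[k] z)‖ := by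
        rw [dist_comm, dist_eq_norm, mulVec_sub, mulVec_mulVec, hpow,
          Function.iterate_succ_apply']
    _ ≤ lam⁻¹ ^ (k + 1) * c := by
        grw [norm_inv_pow_mulVec_le_s13 hM hlam hexp, hc]
    _ = c * lam⁻¹ * lam⁻¹ ^ k := by ring

lemma norm_sub_le_of_tendsto_inv_pow_mulVec_iterate (hM : IsUnit M.det) (hlam : 1 < lam)
    (hexp : ∀ v : n → ℝ, lam * ‖v‖ ≤ ‖M *ᵥ v‖) (hc : ∀ x, ‖f x - M *ᵥ x‖ ≤ c) {z w : n → ℝ}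
    (hw : Tendsto (fun k => (M⁻¹ ^ k) *ᵥ f^[k] z) atTop (nhds w)) :
    ‖z - w‖ ≤ c / (lam - 1) := by
  have hlam0 : 0 < lam := zero_lt_one.trans hlam
  have h := dist_le_of_le_geometric_of_tendsto₀ _ _ (inv_lt_one_of_one_lt₀ hlam)
    (dist_inv_pow_mulVec_iterate_succ_le hM hlam0 hexp hc z) hw
  have hconst : c * lam⁻¹ / (1 - lam⁻¹) = c / (lam - 1) := by
    field_simp
  simpa [dist_eq_norm, hconst] using h

lemma eq_mulVec_of_tendsto_inv_pow_mulVec_iterate (hM : IsUnit M.det) {z w w' : n → ℝ}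
    (hw : Tendsto (fun k => (M⁻¹ ^ k) *ᵥ f^[k] z) atTop (nhds w))
    (hw' : Tendsto (fun k => (M⁻¹ ^ k) *ᵥ f^[k] (f z)) atTop (nhds w')) :
    w' = M *ᵥ w := by
  have hshift : (fun k => (M⁻¹ ^ k) *ᵥ f^[k] (f z)) =
      fun k => M *ᵥ ((M⁻¹ ^ (k + 1)) *ᵥ f^[k + 1] z) := by
    funext k
    rw [mulVec_mulVec, pow_succ', ← mul_assoc, mul_nonsing_inv _ hM, one_mul,
      Function.iterate_succ_apply]
  refine tendsto_nhds_unique hw' ?_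
  rw [hshift]
  exact ((continuous_const.matrix_mulVec continuous_id).tendsto w).comp
    (hw.comp (tendsto_add_atTop_nat 1))

variable {β : (n → ℝ) → (n → ℝ)}

lemma iterate_apply_eq_pow_mulVec (hM : IsUnit M.det)
    (hβ : ∀ x, Tendsto (fun k => (M⁻¹ ^ k) *ᵥ f^[k] x) atTop (nhds (β x))) (k : ℕ) (x : n → ℝ) :
    β (f^[k] x) = (M ^ k) *ᵥ β x := by
  induction k with
  | zero => simp
  | succ k ih =>
    rw [Function.iterate_succ_apply', eq_mulVec_of_tendsto_inv_pow_mulVec_iterate hM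
      (hβ _) (hβ _), ih, mulVec_mulVec, pow_succ']

lemma norm_iterate_sub_pow_mulVec_le (hM : IsUnit M.det) (hlam : 1 < lam)
    (hexp : ∀ v : n → ℝ, lam * ‖v‖ ≤ ‖M *ᵥ v‖) (hc : ∀ x, ‖f x - M *ᵥ x‖ ≤ c)
    (hβ : ∀ x, Tendsto (fun k => (M⁻¹ ^ k) *ᵥ f^[k] x) atTop (nhds (β x))) (k : ℕ)
    (x : n → ℝ) : ‖f^[k] x - (M ^ k) *ᵥ β x‖ ≤ c / (lam - 1) := by
  rw [← iterate_apply_eq_pow_mulVec hM hβ]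
  exact norm_sub_le_of_tendsto_inv_pow_mulVec_iterate hM hlam hexp hc (hβ _)

end Matrix

theorem stmt13_general (b : ℕ) (A : Matrix (Fin b) (Fin b) ℤ)
    (f : (Fin b → ℝ) → (Fin b → ℝ))
    (lam c : ℝ) (hlam : 1 < lam) (hA : (realMat A).det ≠ 0)
    (hexp : ∀ v : Fin b → ℝ, lam * ‖v‖ ≤ ‖(realMat A).mulVec v‖)
    (hc : ∀ x : Fin b → ℝ, ‖f x - (realMat A).mulVec x‖ ≤ c)
    (β : (Fin b → ℝ) → (Fin b → ℝ))
    (hβ : ∀ x : Fin b → ℝ, Tendsto (fun n : ℕ => ((realMat A)⁻¹ ^ n).mulVec (f^[n] x))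
      atTop (nhds (β x))) :
    (∀ x y : Fin b → ℝ,
      (∃ K : ℝ, ∀ n : ℕ, ‖f^[n] x - (realMat A ^ n).mulVec y‖ ≤ K) ↔ y = β x) ∧
    (∀ α : (Fin b → ℝ) → (Fin b → ℝ),
      (∀ (x : Fin b → ℝ) (i : ℕ),
        ‖f^[i] x - (realMat A ^ i).mulVec (α x)‖ ≤ c / (lam - 1)) → α = β) := by
  have hM : IsUnit (realMat A).det := isUnit_iff_ne_zero.2 hA
  have hshadow : ∀ x y : Fin b → ℝ,
      (∃ K : ℝ, ∀ n : ℕ, ‖f^[n] x - (realMat A ^ n).mulVec y‖ ≤ K) ↔ y = β x := by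
    refine fun x y => ⟨fun ⟨K, hK⟩ => ?_, ?_⟩
    · exact tendsto_nhds_unique
        (tendsto_inv_pow_mulVec_of_norm_sub_pow_mulVec_le hM hlam hexp hK) (hβ x)
    · rintro rfl
      exact ⟨_, fun n => norm_iterate_sub_pow_mulVec_le hM hlam hexp hc hβ n x⟩
  exact ⟨hshadow, fun α hα => funext fun x => (hshadow x (α x)).1 ⟨_, hα x⟩⟩

/-- The orbits `(x̃, f̃)` and `(ỹ, A)` shadow with some constant if and only if
`ỹ = β̃(x̃)`; in particular `β̃` coincides with the map `α̃` assigning to `x̃` the unique point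
whose `A`-orbit `δ(f)`-shadows the `f̃`-orbit of `x̃`. -/
theorem stmt13 (b : ℕ) (hb : 1 ≤ b) (A : Matrix (Fin b) (Fin b) ℤ)
    (f : (Fin b → ℝ) → (Fin b → ℝ)) (hcont : Continuous f)
    (hequiv : ∀ (x : Fin b → ℝ) (n : Fin b → ℤ),
      f (x + intVec n) = f x + (realMat A).mulVec (intVec n))
    (lam c : ℝ) (hlam : 1 < lam) (hA : (realMat A).det ≠ 0)
    (hexp : ∀ v : Fin b → ℝ, lam * ‖v‖ ≤ ‖(realMat A).mulVec v‖)
    (hc : ∀ x : Fin b → ℝ, ‖f x - (realMat A).mulVec x‖ ≤ c)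
    (β : (Fin b → ℝ) → (Fin b → ℝ))
    (hβ : ∀ x : Fin b → ℝ, Tendsto (fun n : ℕ => ((realMat A)⁻¹ ^ n).mulVec (f^[n] x))
      atTop (nhds (β x))) :
    (∀ x y : Fin b → ℝ,
      (∃ K : ℝ, ∀ n : ℕ, ‖f^[n] x - (realMat A ^ n).mulVec y‖ ≤ K) ↔ y = β x) ∧
    (∀ α : (Fin b → ℝ) → (Fin b → ℝ),
      (∀ (x : Fin b → ℝ) (i : ℕ),
        ‖f^[i] x - (realMat A ^ i).mulVec (α x)‖ ≤ c / (lam - 1)) → α = β) :=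
  stmt13_general b A f lam c hlam hA hexp hc β hβ
end

section
/- Let f̃ : ℝ^b → ℝ^b be an A-equivariant lift with A expanding with constant λ > 1 for the norm ‖·‖. For x̃ ∈ ℝ^b let ⌊x̃⌋ ∈ ℤ^b denote the componentwise floor and set d_k(x̃) = ⌊f̃^k(x̃)⌋ − ⌊x̃⌋ ∈ ℤ^b. Then (A^k − I)^{-1} d_k(x̃) → β̃(x̃) as k → ∞, for every x̃ ∈ ℝ^b. -/
open Matrix Filter

/-!
Write `f̃^k(x̃) = A^k g_k` with `g_k = A^{-k} f̃^k(x̃) → β̃(x̃)`, and `d_k = f̃^k(x̃) - w_k` where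
`w_k = {f̃^k(x̃)} + ⌊x̃⌋` is bounded. Then `(A^k - I)⁻¹ d_k = g_k + (A^k - I)⁻¹ (g_k - w_k)`, and
expansion gives `‖(A^k - I) v‖ ≥ (λ^k - 1) ‖v‖`, so the second term is `O(1 / (λ^k - 1)) → 0`.
-/

open Asymptotics

section ExpandingMatrix

variable {n : Type*} [Fintype n] [DecidableEq n]

theorem isUnit_of_mul_norm_le_norm_mulVec {P : Matrix n n ℝ} {c : ℝ} (hc : 0 < c)
    (hP : ∀ v, c * ‖v‖ ≤ ‖P *ᵥ v‖) : IsUnit P := by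
  rw [← Matrix.mulVec_injective_iff_isUnit]
  intro v w hvw
  have h := hP (v - w)
  rw [Matrix.mulVec_sub, hvw, sub_self, norm_zero] at h
  exact sub_eq_zero.mp (norm_le_zero_iff.mp (nonpos_of_mul_nonpos_right h hc))

theorem norm_inv_mulVec_le {P : Matrix n n ℝ} {c : ℝ} (hc : 0 < c)
    (hP : ∀ v, c * ‖v‖ ≤ ‖P *ᵥ v‖) (u : n → ℝ) : ‖P⁻¹ *ᵥ u‖ ≤ c⁻¹ * ‖u‖ := by
  have hdet := (Matrix.isUnit_iff_isUnit_det P).mp (isUnit_of_mul_norm_le_norm_mulVec hc hP)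
  have h := hP (P⁻¹ *ᵥ u)
  rw [Matrix.mulVec_mulVec, Matrix.mul_nonsing_inv P hdet, Matrix.one_mulVec] at h
  rwa [le_inv_mul_iff₀ hc]

theorem pow_mul_norm_le_norm_pow_mulVec {M : Matrix n n ℝ} {lam : ℝ} (hlam : 0 ≤ lam)
    (hM : ∀ v, lam * ‖v‖ ≤ ‖M *ᵥ v‖) (k : ℕ) (v : n → ℝ) : lam ^ k * ‖v‖ ≤ ‖(M ^ k) *ᵥ v‖ := by
  induction k generalizing v with
  | zero => simp
  | succ k ih =>
    calc lam ^ (k + 1) * ‖v‖ = lam ^ k * (lam * ‖v‖) := by ring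
      _ ≤ lam ^ k * ‖M *ᵥ v‖ := mul_le_mul_of_nonneg_left (hM v) (pow_nonneg hlam k)
      _ ≤ ‖(M ^ (k + 1)) *ᵥ v‖ := by rw [pow_succ, ← Matrix.mulVec_mulVec]; exact ih _

theorem pow_sub_one_mul_norm_le_norm_pow_sub_one_mulVec {M : Matrix n n ℝ} {lam : ℝ}
    (hlam : 0 ≤ lam) (hM : ∀ v, lam * ‖v‖ ≤ ‖M *ᵥ v‖) (k : ℕ) (v : n → ℝ) :
    (lam ^ k - 1) * ‖v‖ ≤ ‖(M ^ k - 1) *ᵥ v‖ := by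
  rw [Matrix.sub_mulVec, Matrix.one_mulVec, sub_mul, one_mul]
  exact (sub_le_sub_right (pow_mul_norm_le_norm_pow_mulVec hlam hM k v) _).trans
    (norm_sub_norm_le _ _)

theorem tendsto_inv_pow_sub_one_mulVec_nhds_zero {M : Matrix n n ℝ} {lam : ℝ} (hlam : 1 < lam)
    (hM : ∀ v, lam * ‖v‖ ≤ ‖M *ᵥ v‖) {u : ℕ → n → ℝ}
    (hu : u =O[atTop] (fun _ => (1 : ℝ))) :
    Tendsto (fun k => (M ^ k - 1)⁻¹ *ᵥ u k) atTop (nhds 0) := by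
  obtain ⟨C, hC⟩ := hu.bound
  have hpow : Tendsto (fun k : ℕ => lam ^ k - 1) atTop atTop :=
    tendsto_atTop_add_const_right _ _ (tendsto_pow_atTop_atTop_of_one_lt hlam)
  refine squeeze_zero_norm' ?_ (by simpa using (tendsto_inv_atTop_zero.comp hpow).mul_const C)
  filter_upwards [hC, hpow.eventually_gt_atTop 0] with k hCk hk
  calc ‖(M ^ k - 1)⁻¹ *ᵥ u k‖ ≤ (lam ^ k - 1)⁻¹ * ‖u k‖ :=
        norm_inv_mulVec_le hk (pow_sub_one_mul_norm_le_norm_pow_sub_one_mulVec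
          (zero_le_one.trans hlam.le) hM k) _
    _ ≤ (lam ^ k - 1)⁻¹ * C := by
        refine mul_le_mul_of_nonneg_left ?_ (inv_nonneg.mpr hk.le)
        simpa using hCk

theorem inv_sub_one_mulVec_mulVec_sub {P : Matrix n n ℝ} (hP : IsUnit (P - 1)) (g w : n → ℝ) :
    (P - 1)⁻¹ *ᵥ (P *ᵥ g - w) = g + (P - 1)⁻¹ *ᵥ (g - w) := by
  have hdet := (Matrix.isUnit_iff_isUnit_det _).mp hP
  have h : P *ᵥ g - w = (P - 1) *ᵥ g + (g - w) := by
    rw [Matrix.sub_mulVec, Matrix.one_mulVec]; abel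
  rw [h, Matrix.mulVec_add, Matrix.mulVec_mulVec, Matrix.nonsing_inv_mul _ hdet,
    Matrix.one_mulVec]

end ExpandingMatrix

theorem intVec_floor_sub_floor {b : ℕ} (y x : Fin b → ℝ) :
    intVec (fun i => ⌊y i⌋ - ⌊x i⌋) =
      y - ((fun i => Int.fract (y i)) + intVec fun i => ⌊x i⌋) := by
  funext i
  simp only [intVec, Pi.sub_apply, Pi.add_apply, Int.cast_sub, Int.fract]
  ring

theorem norm_fract_le_one {b : ℕ} (y : Fin b → ℝ) : ‖fun i => Int.fract (y i)‖ ≤ 1 :=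
  (pi_norm_le_iff_of_nonneg zero_le_one).mpr fun i => by
    rw [Real.norm_eq_abs, abs_of_nonneg (Int.fract_nonneg _)]
    exact (Int.fract_lt_one _).le

theorem stmt14_general (b : ℕ) (A : Matrix (Fin b) (Fin b) ℤ)
    (f : (Fin b → ℝ) → (Fin b → ℝ))
    (lam : ℝ) (hlam : 1 < lam) (hA : (realMat A).det ≠ 0)
    (hexp : ∀ v : Fin b → ℝ, lam * ‖v‖ ≤ ‖(realMat A).mulVec v‖)
    (β : (Fin b → ℝ) → (Fin b → ℝ))
    (hβ : ∀ x : Fin b → ℝ, Tendsto (fun n : ℕ => ((realMat A)⁻¹ ^ n).mulVec (f^[n] x))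
      atTop (nhds (β x)))
    (x : Fin b → ℝ) :
    Tendsto (fun k : ℕ =>
        (realMat A ^ k - 1)⁻¹.mulVec (intVec (fun i => ⌊f^[k] x i⌋ - ⌊x i⌋)))
      atTop (nhds (β x)) := by
  set M := realMat A
  set g : ℕ → Fin b → ℝ := fun k => (M⁻¹ ^ k) *ᵥ f^[k] x
  set w : ℕ → Fin b → ℝ := fun k => (fun i => Int.fract (f^[k] x i)) + intVec fun i => ⌊x i⌋
  have hfg (k : ℕ) : f^[k] x = M ^ k *ᵥ g k := by
    have hdet : IsUnit (M ^ k).det := by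
      rw [Matrix.det_pow]; exact (isUnit_iff_ne_zero.mpr hA).pow k
    rw [Matrix.mulVec_mulVec, Matrix.inv_pow', Matrix.mul_nonsing_inv _ hdet, Matrix.one_mulVec]
  have hw : w =O[atTop] (fun _ => (1 : ℝ)) :=
    (isBoundedUnder_of ⟨1 + ‖intVec fun i => ⌊x i⌋‖, fun k =>
      (norm_add_le _ _).trans (add_le_add_left (norm_fract_le_one _) _)⟩).isBigO_one ℝ
  have hdecomp : ∀ᶠ k in atTop, g k + (M ^ k - 1)⁻¹ *ᵥ (g k - w k) =
      (M ^ k - 1)⁻¹ *ᵥ intVec (fun i => ⌊f^[k] x i⌋ - ⌊x i⌋) := by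
    filter_upwards [eventually_ge_atTop 1] with k hk
    have hunit : IsUnit (M ^ k - 1) :=
      isUnit_of_mul_norm_le_norm_mulVec (sub_pos.mpr (one_lt_pow₀ hlam (by omega)))
        (pow_sub_one_mul_norm_le_norm_pow_sub_one_mulVec (zero_le_one.trans hlam.le) hexp k)
    rw [intVec_floor_sub_floor, ← inv_sub_one_mulVec_mulVec_sub hunit, ← hfg]
  have hlim := (hβ x).add
    (tendsto_inv_pow_sub_one_mulVec_nhds_zero hlam hexp (((hβ x).isBigO_one ℝ).sub hw))
  rw [add_zero] at hlim
  exact hlim.congr' hdecomp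

/-- With `d_k(x̃) = ⌊f̃^k(x̃)⌋ − ⌊x̃⌋` (componentwise floor), one has
`(A^k − I)⁻¹ d_k(x̃) → β̃(x̃)` as `k → ∞`. -/
theorem stmt14 (b : ℕ) (hb : 1 ≤ b) (A : Matrix (Fin b) (Fin b) ℤ)
    (f : (Fin b → ℝ) → (Fin b → ℝ)) (hcont : Continuous f)
    (hequiv : ∀ (x : Fin b → ℝ) (n : Fin b → ℤ),
      f (x + intVec n) = f x + (realMat A).mulVec (intVec n))
    (lam : ℝ) (hlam : 1 < lam) (hA : (realMat A).det ≠ 0)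
    (hexp : ∀ v : Fin b → ℝ, lam * ‖v‖ ≤ ‖(realMat A).mulVec v‖)
    (β : (Fin b → ℝ) → (Fin b → ℝ))
    (hβ : ∀ x : Fin b → ℝ, Tendsto (fun n : ℕ => ((realMat A)⁻¹ ^ n).mulVec (f^[n] x))
      atTop (nhds (β x)))
    (x : Fin b → ℝ) :
    Tendsto (fun k : ℕ =>
        (realMat A ^ k - 1)⁻¹.mulVec (intVec (fun i => ⌊f^[k] x i⌋ - ⌊x i⌋)))
      atTop (nhds (β x)) :=
  stmt14_general b A f lam hlam hA hexp β hβ x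
end
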